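/- Let W: ℝ → ℝ be nondecreasing, vanishing on (−∞,0), concave on [0,∞), and suppose W(x)/x → c > 0 as x → ∞, with moreover W(x) − W(x−y) → c·y as x → ∞ for each fixed y > 0 and ∫_0^∞ (W(a) − W(a−y) − c y) da = I_y < ∞. Then for all x ≥ y > 0: 0 ≤ W(x) − W(x−y) − c·y ≤ (1/x)·(y·W(y) + I_y + c·y²). -/

import Mathlib

/-!
Concavity makes the defect `f a = W a - W (a - y) - c y` nonincreasing on `[y, ∞)`, and it tends
to `0`, so it is nonnegative there. Splitting `I_y = ∫_0^∞ f` at `y` and `x`, the tail is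
nonnegative, `f ≥ f x` on `[y, x]`, and `f ≥ -c y` everywhere because `W` is nondecreasing; hence
`(x - y) f x ≤ I_y + c y²`. Finally `y f x ≤ y f y ≤ y W y`.
-/

open MeasureTheory Set Filter Topology

theorem ConcaveOn.sub_le_sub_of_le {𝕜 : Type*} [Field 𝕜] [LinearOrder 𝕜] [IsStrictOrderedRing 𝕜]
    {s : Set 𝕜} {f : 𝕜 → 𝕜} (hf : ConcaveOn 𝕜 s f) {x y h : 𝕜} (hx : x - h ∈ s) (hy : y ∈ s)
    (hh : 0 < h) (hxy : x ≤ y) : f y - f (y - h) ≤ f x - f (x - h) := by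
  have hx' : x ∈ s := hf.1.ordConnected.out hx hy ⟨by linarith, hxy⟩
  have hy' : y - h ∈ s := hf.1.ordConnected.out hx hy ⟨by linarith, by linarith⟩
  have key : slope f (y - h) y ≤ slope f (x - h) x := calc
    slope f (y - h) y = slope f y (y - h) := slope_comm _ _ _
    _ ≤ slope f y (x - h) :=
      hf.slope_anti hy ⟨hx, (by linarith : x - h < y).ne⟩ ⟨hy', (by linarith : y - h < y).ne⟩
        (by linarith)
    _ = slope f (x - h) y := slope_comm _ _ _
    _ ≤ slope f (x - h) x :=
      hf.slope_anti hx ⟨hx', (by linarith : x - h < x).ne'⟩ ⟨hy, (by linarith : x - h < y).ne'⟩ hxy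
  simpa [slope_def_field, div_le_div_iff_of_pos_right hh] using key

theorem intervalIntegral_le_integral_Ioi {f : ℝ → ℝ} {a b : ℝ} (hab : a ≤ b)
    (hf : IntegrableOn f (Ioi a)) (htail : ∀ t ∈ Ioi b, 0 ≤ f t) :
    ∫ t in a..b, f t ≤ ∫ t in Ioi a, f t := by
  rw [← intervalIntegral.integral_interval_add_Ioi hf (hf.mono_set (Ioi_subset_Ioi hab))]
  linarith [setIntegral_nonneg (μ := volume) measurableSet_Ioi htail]

theorem sub_mul_le_integral_Ioi_add_mul {f : ℝ → ℝ} {m y x : ℝ} (hy : 0 ≤ y) (hyx : y ≤ x)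
    (hf : IntegrableOn f (Ioi 0)) (hlow : ∀ a ∈ Icc 0 y, -m ≤ f a)
    (hmid : ∀ a ∈ Icc y x, f x ≤ f a) (htail : ∀ a ∈ Ioi x, 0 ≤ f a) :
    (x - y) * f x ≤ (∫ a in Ioi 0, f a) + m * y := by
  have hint : ∀ u v, 0 ≤ u → u ≤ v → IntervalIntegrable f volume u v := fun u v hu huv =>
    (intervalIntegrable_iff_integrableOn_Ioc_of_le huv).2
      (hf.mono_set fun t ht => hu.trans_lt ht.1)
  have hfirst : -(y * m) ≤ ∫ a in (0)..y, f a := by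
    simpa using
      intervalIntegral.integral_mono_on hy intervalIntegrable_const (hint 0 y le_rfl hy) hlow
  have hsecond : (x - y) * f x ≤ ∫ a in y..x, f a := by
    simpa using
      intervalIntegral.integral_mono_on hyx intervalIntegrable_const (hint y x hy hyx) hmid
  have hsplit :=
    intervalIntegral.integral_add_adjacent_intervals (hint 0 y le_rfl hy) (hint y x hy hyx)
  have htotal := intervalIntegral_le_integral_Ioi (hy.trans hyx) hf htail
  linarith

theorem stmt_7_general (W : ℝ → ℝ) (c : ℝ) (hc : 0 < c)
    (hmono : Monotone W)
    (hzero : ∀ x < (0 : ℝ), W x = 0)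
    (hconc : ConcaveOn ℝ (Set.Ici (0 : ℝ)) W)
    (hincr : ∀ y > (0 : ℝ),
      Filter.Tendsto (fun x => W x - W (x - y)) Filter.atTop (nhds (c * y)))
    (y : ℝ) (hy : 0 < y) (Iy : ℝ)
    (hint : IntegrableOn (fun a => W a - W (a - y) - c * y) (Set.Ioi 0) volume)
    (hIy : (∫ a in Set.Ioi (0 : ℝ), (W a - W (a - y) - c * y)) = Iy) :
    ∀ x : ℝ, y ≤ x →
      0 ≤ W x - W (x - y) - c * y ∧
        W x - W (x - y) - c * y ≤ (1 / x) * (y * W y + Iy + c * y ^ 2) := by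
  set f : ℝ → ℝ := fun a => W a - W (a - y) - c * y
  have hanti : ∀ u v, y ≤ u → u ≤ v → f v ≤ f u := fun u v hu huv => by
    simpa [f] using hconc.sub_le_sub_of_le (sub_nonneg.2 hu) (hy.le.trans (hu.trans huv)) hy huv
  have hf_lim : Tendsto f atTop (𝓝 0) := by simpa using (hincr y hy).sub_const (c * y)
  have hf_nonneg : ∀ u, y ≤ u → 0 ≤ f u := fun u hu =>
    le_of_tendsto hf_lim ((eventually_ge_atTop u).mono fun v huv => hanti u v hu huv)
  have hf_lower : ∀ a, -(c * y) ≤ f a := fun a => by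
    simpa [f] using hmono (sub_le_self a hy.le)
  intro x hx
  have hx0 : 0 < x := hy.trans_le hx
  have hfx_le : f x ≤ W y := by
    have hW0 : 0 ≤ W 0 := (hzero (-1) (by norm_num)).symm.le.trans (hmono (by norm_num))
    have := hanti y x le_rfl hx
    simp only [f, sub_self] at this ⊢
    linarith [mul_pos hc hy]
  have hintegral := sub_mul_le_integral_Ioi_add_mul hy.le hx hint (fun a _ => hf_lower a)
    (fun a ha => hanti a x ha.1 ha.2) (fun a ha => hf_nonneg a (hx.trans ha.le))
  refine ⟨hf_nonneg x hx, ?_⟩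
  rw [one_div_mul_eq_div, le_div_iff₀ hx0]
  change f x * x ≤ _
  linarith [mul_le_mul_of_nonneg_left hfx_le hy.le]

/-- Quantitative bound on increments of the concave tilted scale function:
`0 ≤ W(x) − W(x−y) − c·y ≤ (1/x)(y·W(y) + I_y + c·y²)` for `x ≥ y > 0`. -/
theorem stmt_7 (W : ℝ → ℝ) (c : ℝ) (hc : 0 < c)
    (hmono : Monotone W)
    (hzero : ∀ x < (0 : ℝ), W x = 0)
    (hconc : ConcaveOn ℝ (Set.Ici (0 : ℝ)) W)
    (hlin : Filter.Tendsto (fun x => W x / x) Filter.atTop (nhds c))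
    (hincr : ∀ y > (0 : ℝ),
      Filter.Tendsto (fun x => W x - W (x - y)) Filter.atTop (nhds (c * y)))
    (y : ℝ) (hy : 0 < y) (Iy : ℝ)
    (hint : IntegrableOn (fun a => W a - W (a - y) - c * y) (Set.Ioi 0) volume)
    (hIy : (∫ a in Set.Ioi (0 : ℝ), (W a - W (a - y) - c * y)) = Iy) :
    ∀ x : ℝ, y ≤ x →
      0 ≤ W x - W (x - y) - c * y ∧
        W x - W (x - y) - c * y ≤ (1 / x) * (y * W y + Iy + c * y ^ 2) :=
  stmt_7_general W c hc hmono hzero hconc hincr y hy Iy hint hIy
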